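/- arXiv:2604.23404 — 14 statements merged into one kernel-verified Lean document; each statement's English description precedes it below -/
import Mathlib

section
/- Let p, q, r be integers and let T be the upper-triangular matrix !![p, r; 0, q] over ℤ. Then T can be written as A² − B² for some upper-triangular 2×2 integer matrices A and B if and only if there exist integers a, x, d, u such that p = a² − x², q = d² − u², and either ((a+d, x+u) ≠ (0, 0) and gcd(a+d, x+u) divides r), or (a+d = 0, x+u = 0, and r = 0). -/
/-- A 2×2 matrix is upper-triangular if its lower-left entry is 0. -/
def IsUpperTriangular {R : Type*} [Ring R] (A : Matrix (Fin 2) (Fin 2) R) : Prop :=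
  A 1 0 = 0

/-- `T` is representable as a difference of two squares of upper-triangular matrices. -/
def ReprDiffSqUT {R : Type*} [Ring R] (T : Matrix (Fin 2) (Fin 2) R) : Prop :=
  ∃ A B : Matrix (Fin 2) (Fin 2) R,
    IsUpperTriangular A ∧ IsUpperTriangular B ∧ T = A ^ 2 - B ^ 2

theorem main_criterion (p q r : ℤ) :
    ReprDiffSqUT !![p, r; 0, q] ↔
      ∃ a x d u : ℤ, p = a ^ 2 - x ^ 2 ∧ q = d ^ 2 - u ^ 2 ∧
        (((a + d, x + u) ≠ ((0 : ℤ), (0 : ℤ)) ∧ (Int.gcd (a + d) (x + u) : ℤ) ∣ r) ∨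
          (a + d = 0 ∧ x + u = 0 ∧ r = 0)) := by
  constructor
  · rintro ⟨A, B, hA, hB, hT⟩
    have h00 := congrFun (congrFun hT 0) 0
    have h01 := congrFun (congrFun hT 0) 1
    have h11 := congrFun (congrFun hT 1) 1
    simp only [IsUpperTriangular] at hA hB
    simp [pow_two, Matrix.sub_apply, Matrix.mul_apply, Fin.sum_univ_two, hA, hB]
      at h00 h01 h11
    refine ⟨A 0 0, B 0 0, A 1 1, B 1 1, by linarith [h00], by linarith [h11], ?_⟩
    have hr : r = A 0 1 * (A 0 0 + A 1 1) - B 0 1 * (B 0 0 + B 1 1) := by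
      rw [h01]; ring
    by_cases h : (A 0 0 + A 1 1, B 0 0 + B 1 1) = ((0 : ℤ), (0 : ℤ))
    · right
      obtain ⟨h1, h2⟩ := Prod.mk.injEq .. ▸ h
      exact ⟨h1, h2, by rw [hr, h1, h2]; ring⟩
    · left
      refine ⟨h, ?_⟩
      rw [hr]
      exact dvd_sub (Dvd.dvd.mul_left (Int.gcd_dvd_left ..) _)
        (Dvd.dvd.mul_left (Int.gcd_dvd_right ..) _)
  · rintro ⟨a, x, d, u, hp, hq, h⟩
    have hg : (Int.gcd (a + d) (x + u) : ℤ) ∣ r := by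
      rcases h with ⟨_, h⟩ | ⟨_, _, h3⟩
      · exact h
      · simp [h3]
    obtain ⟨k, hk⟩ := hg
    refine ⟨!![a, k * Int.gcdA (a + d) (x + u); 0, d],
      !![x, -(k * Int.gcdB (a + d) (x + u)); 0, u], rfl, rfl, ?_⟩
    have hbez := Int.gcd_eq_gcd_ab (a + d) (x + u)
    ext i j
    fin_cases i <;> fin_cases j <;>
        simp [pow_two, Matrix.sub_apply, Matrix.mul_apply, Fin.sum_univ_two]
    · linear_combination hp
    · linear_combination hk + k * hbez
    · linear_combination hq
end

section
/- Let p, q, r be integers such that p ≡ 2 (mod 4) or q ≡ 2 (mod 4). Then the matrix !![p, r; 0, q] cannot be written as A² − B² for any upper-triangular 2×2 integer matrices A and B. -/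
theorem diag_obstruction (p q r : ℤ) (h : p ≡ 2 [ZMOD 4] ∨ q ≡ 2 [ZMOD 4]) :
    ¬ ReprDiffSqUT !![p, r; 0, q] := by
  rintro ⟨A, B, hA, hB, hT⟩
  have key : ∀ a b : ZMod 4, a ^ 2 - b ^ 2 ≠ 2 := by decide
  have h00 : p = A 0 0 ^ 2 - B 0 0 ^ 2 := by
    have := congrFun (congrFun hT 0) 0
    simp only [IsUpperTriangular] at hA hB
    simpa [pow_two, Matrix.mul_apply, Fin.sum_univ_two, hA, hB] using this
  have h11 : q = A 1 1 ^ 2 - B 1 1 ^ 2 := by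
    have := congrFun (congrFun hT 1) 1
    simp only [IsUpperTriangular] at hA hB
    simpa [pow_two, Matrix.mul_apply, Fin.sum_univ_two, hA, hB] using this
  rcases h with h | h
  · have hp : ((p : ZMod 4)) = 2 := by
      have := (ZMod.intCast_eq_intCast_iff p 2 4).mpr h
      simpa using this
    apply key (A 0 0 : ZMod 4) (B 0 0 : ZMod 4)
    rw [← hp, h00]
    push_cast
    ring
  · have hq : ((q : ZMod 4)) = 2 := by
      have := (ZMod.intCast_eq_intCast_iff q 2 4).mpr h
      simpa using this
    apply key (A 1 1 : ZMod 4) (B 1 1 : ZMod 4)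
    rw [← hq, h11]
    push_cast
    ring
end

section
/- Let a, b, c be elements of ℤ/4ℤ. The matrix !![a, b; 0, c] over ℤ/4ℤ can be written as A² − B² for some upper-triangular 2×2 matrices A, B over ℤ/4ℤ if and only if it is NOT the case that (a = 2 or c = 2, or (a = c and a ∈ {1, 3} and b ∈ {1, 3})). -/
lemma reprDiffSqUT_iff (a b c : ZMod 4) : ReprDiffSqUT !![a,b;0,c] ↔
    ∃ p s : ZMod 4, a = p^2 - s^2 ∧ ∃ r u : ZMod 4, c = r^2 - u^2 ∧
      ∃ q t : ZMod 4, b = q*(p+r) - t*(s+u) := by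
  constructor
  · rintro ⟨A, B, hA, hB, h⟩
    refine ⟨A 0 0, B 0 0, ?_, A 1 1, B 1 1, ?_, A 0 1, B 0 1, ?_⟩
    · have := congrFun (congrFun h 0) 0
      simp [pow_two, Matrix.mul_apply, Fin.sum_univ_two, IsUpperTriangular] at this
      rw [hA, hB] at this
      linear_combination this
    · have := congrFun (congrFun h 1) 1
      simp [pow_two, Matrix.mul_apply, Fin.sum_univ_two, IsUpperTriangular] at this
      rw [hA, hB] at this
      linear_combination this
    · have := congrFun (congrFun h 0) 1
      simp [pow_two, Matrix.mul_apply, Fin.sum_univ_two, IsUpperTriangular] at this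
      linear_combination this
  · rintro ⟨p, s, ha, r, u, hc, q, t, hb⟩
    refine ⟨!![p,q;0,r], !![s,t;0,u], rfl, rfl, ?_⟩
    ext i j
    fin_cases i <;> fin_cases j <;>
      simp [pow_two, Matrix.mul_apply, Fin.sum_univ_two, ha, hb, hc] <;> ring

set_option maxHeartbeats 20000000 in
lemma mod4_finite_check : ∀ a b c : ZMod 4,
    (∃ p s : ZMod 4, a = p^2 - s^2 ∧ ∃ r u : ZMod 4, c = r^2 - u^2 ∧
      ∃ q t : ZMod 4, b = q*(p+r) - t*(s+u)) ↔
      ¬ (a = 2 ∨ c = 2 ∨ (a = c ∧ (a = 1 ∨ a = 3) ∧ (b = 1 ∨ b = 3))) := by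
  decide

theorem mod4_classification (a b c : ZMod 4) :
    ReprDiffSqUT !![a, b; 0, c] ↔
      ¬ (a = 2 ∨ c = 2 ∨ (a = c ∧ (a = 1 ∨ a = 3) ∧ (b = 1 ∨ b = 3))) := by
  rw [reprDiffSqUT_iff]
  exact mod4_finite_check a b c
end

section
/- The integer matrix !![4, 2; 0, 4] cannot be written as A² − B² for any upper-triangular 2×2 integer matrices A and B. -/
lemma diff_sq_four (a d : ℤ) (h : a * a - d * d = 4) : d = 0 ∧ (a = 2 ∨ a = -2) := by
  have h' : (a - d) * (a + d) = 4 := by ring_nf; linarith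
  have hd : a - d ∣ 4 := ⟨a + d, h'.symm⟩
  have habs : |a - d| ≤ 4 := Int.le_of_dvd (by norm_num) ((abs_dvd _ _).mpr hd)
  have hb := abs_le.mp habs
  have hc : a - d = -4 ∨ a - d = -3 ∨ a - d = -2 ∨ a - d = -1 ∨ a - d = 0 ∨
      a - d = 1 ∨ a - d = 2 ∨ a - d = 3 ∨ a - d = 4 := by omega
  rcases hc with hc | hc | hc | hc | hc | hc | hc | hc | hc <;> rw [hc] at h' <;> omega

theorem example_N_not_representable :
    ¬ ReprDiffSqUT (!![4, 2; 0, 4] : Matrix (Fin 2) (Fin 2) ℤ) := by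
  rintro ⟨A, B, hA, hB, hT⟩
  have h00 := congrFun (congrFun hT 0) 0
  have h11 := congrFun (congrFun hT 1) 1
  have h01 := congrFun (congrFun hT 0) 1
  simp only [IsUpperTriangular] at hA hB
  simp [pow_two, Matrix.mul_apply, Fin.sum_univ_two, Matrix.sub_apply, hA, hB,
    IsUpperTriangular] at h00 h11 h01
  obtain ⟨hd, ha⟩ := diff_sq_four _ _ (by linarith : A 0 0 * A 0 0 - B 0 0 * B 0 0 = 4)
  obtain ⟨hf, hc⟩ := diff_sq_four _ _ (by linarith : A 1 1 * A 1 1 - B 1 1 * B 1 1 = 4)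
  rw [hd, hf] at h01
  rcases ha with ha | ha <;> rcases hc with hc | hc <;> rw [ha, hc] at h01 <;> omega
end

section
/- For all integers k, n, r, the matrix !![4k+1, r; 0, 4n+3] can be written as A² − B² for some upper-triangular 2×2 integer matrices A and B. -/
theorem rep_4k1_4n3 (k n r : ℤ) :
    ReprDiffSqUT (!![4 * k + 1, r; 0, 4 * n + 3] : Matrix (Fin 2) (Fin 2) ℤ) := by
  refine ⟨!![2*k+1, -r*(k+n); 0, 2*n+2], !![2*k, -r*(k+n+1); 0, 2*n+1], rfl, rfl, ?_⟩
  have : ∀ M : Matrix (Fin 2) (Fin 2) ℤ, M ^ 2 = M * M := fun M => sq M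
  rw [this, this]
  ext i j
  fin_cases i <;> fin_cases j <;>
    simp [Matrix.mul_apply, Fin.sum_univ_succ] <;> ring
end

section
/- For all integers k, n, r, the matrix !![4k+1, 2r; 0, 4n+1] can be written as A² − B² for some upper-triangular 2×2 integer matrices A and B. -/
theorem rep_4k1_4n1 (k n r : ℤ) :
    ReprDiffSqUT (!![4 * k + 1, 2 * r; 0, 4 * n + 1] : Matrix (Fin 2) (Fin 2) ℤ) := by
  refine ⟨!![2*k+1, r; 0, 2*n+1], !![2*k, r; 0, 2*n], ?_, ?_, ?_⟩
  · simp [IsUpperTriangular]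
  · simp [IsUpperTriangular]
  · rw [pow_two, pow_two]
    ext i j
    fin_cases i <;> fin_cases j <;>
      simp [Matrix.mul_apply, Fin.sum_univ_two] <;> ring
end

section
/- For all integers k, n, r, the matrix !![4k+3, 2r; 0, 4n+3] can be written as A² − B² for some upper-triangular 2×2 integer matrices A and B. -/
theorem rep_4k3_4n3 (k n r : ℤ) :
    ReprDiffSqUT (!![4 * k + 3, 2 * r; 0, 4 * n + 3] : Matrix (Fin 2) (Fin 2) ℤ) := by
  refine ⟨!![2*k+2, r; 0, 2*n+2], !![2*k+1, r; 0, 2*n+1], ?_, ?_, ?_⟩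
  · simp [IsUpperTriangular]
  · simp [IsUpperTriangular]
  · ext i j
    fin_cases i <;> fin_cases j <;>
      simp [pow_two, Matrix.mul_apply, Fin.sum_univ_succ] <;> ring
end

section
/- For all integers k, n, r, the matrix !![2k+1, r; 0, 4n] can be written as A² − B² for some upper-triangular 2×2 integer matrices A and B. -/
theorem rep_odd_4n (k n r : ℤ) :
    ReprDiffSqUT (!![2 * k + 1, r; 0, 4 * n] : Matrix (Fin 2) (Fin 2) ℤ) := by
  refine ⟨!![k + 1, -r; 0, -(n + 1)], !![k, -r; 0, 1 - n], rfl, rfl, ?_⟩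
  ext i j
  fin_cases i <;> fin_cases j <;>
    simp [pow_two, Matrix.mul_apply, Fin.sum_univ_succ] <;> ring
end

section
/- For all integers k, n, r, the matrix !![4k, r; 0, 2n+1] can be written as A² − B² for some upper-triangular 2×2 integer matrices A and B. -/
theorem rep_4k_odd (k n r : ℤ) :
    ReprDiffSqUT (!![4 * k, r; 0, 2 * n + 1] : Matrix (Fin 2) (Fin 2) ℤ) := by
  refine ⟨!![k + 1, r; 0, -(n + 1)], !![k - 1, r; 0, -n], rfl, rfl, ?_⟩
  ext i j
  fin_cases i <;> fin_cases j <;>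
    simp [pow_two, Matrix.mul_apply, Fin.sum_univ_two] <;> ring
end

section
/- Let i, j ∈ {0, 1, 2, 3} and let r be an element of ℤ/16ℤ. The matrix M = !![4i, r; 0, 4j] over ℤ/16ℤ can be written as A² − B² for some upper-triangular 2×2 matrices A, B over ℤ/16ℤ if and only if one of the following holds: (1) (i, j) ∈ {(1,1), (3,3)} and r ≡ 0 (mod 4); (2) (i, j) ∈ {(1,3), (2,2), (3,1)} and r ≡ 0 (mod 2); (3) (i, j) ∈ {(0,0), (0,1), (0,2), (0,3), (1,0), (1,2), (2,0), (2,1), (2,3), (3,0), (3,2)}, with r arbitrary. -/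
lemma sq_ut {R : Type*} [CommRing R] (A : Matrix (Fin 2) (Fin 2) R) (h : A 1 0 = 0) :
    A ^ 2 = !![A 0 0 ^ 2, A 0 1 * (A 0 0 + A 1 1); 0, A 1 1 ^ 2] := by
  ext i j
  fin_cases i <;> fin_cases j <;>
    simp [pow_two, Matrix.mul_apply, Fin.sum_univ_two, h] <;> ring

lemma fwd (T : Matrix (Fin 2) (Fin 2) (ZMod 16)) (h : ReprDiffSqUT T) :
    ∃ a b d e c f : ZMod 16,
      T = !![a^2 - e^2, b*(a+d) - c*(e+f); 0, d^2 - f^2] := by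
  obtain ⟨A, B, hA, hB, hT⟩ := h
  refine ⟨A 0 0, A 0 1, A 1 1, B 0 0, B 0 1, B 1 1, ?_⟩
  rw [hT, sq_ut A hA, sq_ut B hB]
  ext i j
  fin_cases i <;> fin_cases j <;> simp

lemma achieve (r T00 T11 a b d e c f u v : ZMod 16)
    (h1 : T00 = a^2 - e^2) (h2 : T11 = d^2 - f^2)
    (hu : a + d = u) (hv : e + f = v) (h3 : r = b*u - c*v) :
    ReprDiffSqUT !![T00, r; 0, T11] := by
  refine ⟨!![a,b;0,d], !![e,c;0,f], by simp [IsUpperTriangular], by simp [IsUpperTriangular], ?_⟩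
  rw [sq_ut !![a,b;0,d] (by simp), sq_ut !![e,c;0,f] (by simp)]
  ext i j
  fin_cases i <;> fin_cases j <;> simp [h1, h2, h3, ← hu, ← hv]

lemma hd4 : ∀ a e : ZMod 16, a^2 - e^2 = 4 → (∃ u, a = 4*u+2) ∧ ∃ v, e = 4*v := by decide
lemma hd12 : ∀ a e : ZMod 16, a^2 - e^2 = 12 → (∃ u, a = 4*u) ∧ ∃ v, e = 4*v+2 := by decide
lemma hd8 : ∀ a e : ZMod 16, a^2 - e^2 = 8 → (∃ u, a = 2*u+1) ∧ ∃ v, e = 2*v+1 := by decide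

lemma dvd4_char (r : ZMod 16) :
    (∃ s : ℤ, 4 ∣ s ∧ r = (s : ZMod 16)) ↔ ∃ t : ZMod 16, r = 4 * t := by
  constructor
  · rintro ⟨s, ⟨m, rfl⟩, rfl⟩
    exact ⟨(m : ZMod 16), by push_cast; ring⟩
  · rintro ⟨t, rfl⟩
    refine ⟨4 * (t.val : ℤ), ⟨_, rfl⟩, ?_⟩
    push_cast
    simp [ZMod.natCast_val, ZMod.cast_id]

lemma dvd2_char (r : ZMod 16) :
    (∃ s : ℤ, 2 ∣ s ∧ r = (s : ZMod 16)) ↔ ∃ t : ZMod 16, r = 2 * t := by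
  constructor
  · rintro ⟨s, ⟨m, rfl⟩, rfl⟩
    exact ⟨(m : ZMod 16), by push_cast; ring⟩
  · rintro ⟨t, rfl⟩
    refine ⟨2 * (t.val : ℤ), ⟨_, rfl⟩, ?_⟩
    push_cast
    simp [ZMod.natCast_val, ZMod.cast_id]

theorem mod16_classification (i j : ℕ) (hi : i ≤ 3) (hj : j ≤ 3) (r : ZMod 16) :
    ReprDiffSqUT !![(4 * i : ZMod 16), r; 0, (4 * j : ZMod 16)] ↔
      (((i, j) ∈ ({(1, 1), (3, 3)} : Set (ℕ × ℕ))) ∧ (∃ s : ℤ, 4 ∣ s ∧ r = (s : ZMod 16))) ∨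
      (((i, j) ∈ ({(1, 3), (2, 2), (3, 1)} : Set (ℕ × ℕ))) ∧ (∃ s : ℤ, 2 ∣ s ∧ r = (s : ZMod 16))) ∨
      ((i, j) ∈ ({(0, 0), (0, 1), (0, 2), (0, 3), (1, 0), (1, 2), (2, 0), (2, 1), (2, 3),
        (3, 0), (3, 2)} : Set (ℕ × ℕ))) := by
  interval_cases i <;> interval_cases j
  -- (0,0)
  · exact iff_of_true
      (achieve r _ _ 0 r 1 0 0 1 1 1 (by decide) (by decide) (by decide) (by decide) (by ring))
      (Or.inr (Or.inr (by simp)))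
  -- (0,1)
  · exact iff_of_true
      (achieve r _ _ 15 r 2 1 0 0 1 1 (by decide) (by decide) (by decide) (by decide) (by ring))
      (Or.inr (Or.inr (by simp)))
  -- (0,2)
  · exact iff_of_true
      (achieve r _ _ 0 r 1 0 0 3 1 3 (by decide) (by decide) (by decide) (by decide) (by ring))
      (Or.inr (Or.inr (by simp)))
  -- (0,3)
  · exact iff_of_true
      (achieve r _ _ 1 r 0 1 0 2 1 3 (by decide) (by decide) (by decide) (by decide) (by ring))
      (Or.inr (Or.inr (by simp)))
  -- (1,0)
  · exact iff_of_true
      (achieve r _ _ 2 r 15 0 0 15 1 15 (by decide) (by decide) (by decide) (by decide) (by ring))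
      (Or.inr (Or.inr (by simp)))
  -- (1,1)
  · constructor
    · intro h
      obtain ⟨a, b, d, e, c, f, hm⟩ := fwd _ h
      have h00 := congrFun (congrFun hm 0) 0
      have h01 := congrFun (congrFun hm 0) 1
      have h11 := congrFun (congrFun hm 1) 1
      simp at h00 h01 h11
      obtain ⟨⟨u, rfl⟩, ⟨v, rfl⟩⟩ := hd4 a e (by linear_combination h00.symm)
      obtain ⟨⟨u', rfl⟩, ⟨v', rfl⟩⟩ := hd4 d f (by linear_combination h11.symm)
      refine Or.inl ⟨by simp, (dvd4_char r).2 ⟨b*(u+u'+1) - c*(v+v'), ?_⟩⟩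
      rw [h01]; ring
    · rintro (⟨hmem, hs⟩ | ⟨hmem, hs⟩ | hmem)
      · obtain ⟨t, rfl⟩ := (dvd4_char r).1 hs
        exact achieve _ _ _ 2 t 2 0 0 0 4 0 (by decide) (by decide) (by decide) (by decide)
          (by ring)
      · simp [Prod.ext_iff] at hmem
      · simp [Prod.ext_iff] at hmem
  -- (1,2)
  · exact iff_of_true
      (achieve r _ _ 14 r 3 0 0 1 1 1 (by decide) (by decide) (by decide) (by decide) (by ring))
      (Or.inr (Or.inr (by simp)))
  -- (1,3)
  · constructor
    · intro h
      obtain ⟨a, b, d, e, c, f, hm⟩ := fwd _ h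
      have h00 := congrFun (congrFun hm 0) 0
      have h01 := congrFun (congrFun hm 0) 1
      have h11 := congrFun (congrFun hm 1) 1
      simp at h00 h01 h11
      obtain ⟨⟨u, rfl⟩, ⟨v, rfl⟩⟩ := hd4 a e (by linear_combination h00.symm)
      obtain ⟨⟨u', rfl⟩, ⟨v', rfl⟩⟩ := hd12 d f (by linear_combination h11.symm)
      refine Or.inr (Or.inl ⟨by simp, (dvd2_char r).2
        ⟨b*(2*(u+u')+1) - c*(2*(v+v')+1), ?_⟩⟩)
      rw [h01]; ring
    · rintro (⟨hmem, hs⟩ | ⟨hmem, hs⟩ | hmem)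
      · simp [Prod.ext_iff] at hmem
      · obtain ⟨t, rfl⟩ := (dvd2_char r).1 hs
        exact achieve _ _ _ 2 t 0 0 0 2 2 2 (by decide) (by decide) (by decide) (by decide)
          (by ring)
      · simp [Prod.ext_iff] at hmem
  -- (2,0)
  · exact iff_of_true
      (achieve r _ _ 1 r 0 3 0 0 1 3 (by decide) (by decide) (by decide) (by decide) (by ring))
      (Or.inr (Or.inr (by simp)))
  -- (2,1)
  · exact iff_of_true
      (achieve r _ _ 15 r 2 3 0 0 1 3 (by decide) (by decide) (by decide) (by decide) (by ring))
      (Or.inr (Or.inr (by simp)))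
  -- (2,2)
  · constructor
    · intro h
      obtain ⟨a, b, d, e, c, f, hm⟩ := fwd _ h
      have h00 := congrFun (congrFun hm 0) 0
      have h01 := congrFun (congrFun hm 0) 1
      have h11 := congrFun (congrFun hm 1) 1
      simp at h00 h01 h11
      obtain ⟨⟨u, rfl⟩, ⟨v, rfl⟩⟩ := hd8 a e (by linear_combination h00.symm)
      obtain ⟨⟨u', rfl⟩, ⟨v', rfl⟩⟩ := hd8 d f (by linear_combination h11.symm)
      refine Or.inr (Or.inl ⟨by simp, (dvd2_char r).2 ⟨b*(u+u'+1) - c*(v+v'+1), ?_⟩⟩)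
      rw [h01]; ring
    · rintro (⟨hmem, hs⟩ | ⟨hmem, hs⟩ | hmem)
      · simp [Prod.ext_iff] at hmem
      · obtain ⟨t, rfl⟩ := (dvd2_char r).1 hs
        exact achieve _ _ _ 1 t 1 3 0 3 2 6 (by decide) (by decide) (by decide) (by decide)
          (by ring)
      · simp [Prod.ext_iff] at hmem
  -- (2,3)
  · exact iff_of_true
      (achieve r _ _ 1 r 0 3 0 2 1 5 (by decide) (by decide) (by decide) (by decide) (by ring))
      (Or.inr (Or.inr (by simp)))
  -- (3,0)
  · exact iff_of_true
      (achieve r _ _ 0 r 1 2 0 1 1 3 (by decide) (by decide) (by decide) (by decide) (by ring))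
      (Or.inr (Or.inr (by simp)))
  -- (3,1)
  · constructor
    · intro h
      obtain ⟨a, b, d, e, c, f, hm⟩ := fwd _ h
      have h00 := congrFun (congrFun hm 0) 0
      have h01 := congrFun (congrFun hm 0) 1
      have h11 := congrFun (congrFun hm 1) 1
      simp at h00 h01 h11
      obtain ⟨⟨u, rfl⟩, ⟨v, rfl⟩⟩ := hd12 a e (by linear_combination h00.symm)
      obtain ⟨⟨u', rfl⟩, ⟨v', rfl⟩⟩ := hd4 d f (by linear_combination h11.symm)
      refine Or.inr (Or.inl ⟨by simp, (dvd2_char r).2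
        ⟨b*(2*(u+u')+1) - c*(2*(v+v')+1), ?_⟩⟩)
      rw [h01]; ring
    · rintro (⟨hmem, hs⟩ | ⟨hmem, hs⟩ | hmem)
      · simp [Prod.ext_iff] at hmem
      · obtain ⟨t, rfl⟩ := (dvd2_char r).1 hs
        exact achieve _ _ _ 0 t 2 2 0 0 2 2 (by decide) (by decide) (by decide) (by decide)
          (by ring)
      · simp [Prod.ext_iff] at hmem
  -- (3,2)
  · exact iff_of_true
      (achieve r _ _ 0 r 1 2 0 3 1 5 (by decide) (by decide) (by decide) (by decide) (by ring))
      (Or.inr (Or.inr (by simp)))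
  -- (3,3)
  · constructor
    · intro h
      obtain ⟨a, b, d, e, c, f, hm⟩ := fwd _ h
      have h00 := congrFun (congrFun hm 0) 0
      have h01 := congrFun (congrFun hm 0) 1
      have h11 := congrFun (congrFun hm 1) 1
      simp at h00 h01 h11
      obtain ⟨⟨u, rfl⟩, ⟨v, rfl⟩⟩ := hd12 a e (by linear_combination h00.symm)
      obtain ⟨⟨u', rfl⟩, ⟨v', rfl⟩⟩ := hd12 d f (by linear_combination h11.symm)
      refine Or.inl ⟨by simp, (dvd4_char r).2 ⟨b*(u+u') - c*(v+v'+1), ?_⟩⟩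
      rw [h01]; ring
    · rintro (⟨hmem, hs⟩ | ⟨hmem, hs⟩ | hmem)
      · obtain ⟨t, rfl⟩ := (dvd4_char r).1 hs
        exact achieve _ _ _ 0 0 0 2 (-t) 2 0 4 (by decide) (by decide) (by decide) (by decide)
          (by ring)
      · simp [Prod.ext_iff] at hmem
      · simp [Prod.ext_iff] at hmem
end

section
/- Exactly 48 matrices !![a, b; 0, c] over ℤ/16ℤ with both diagonal entries a and c divisible by 4 fail to be writable as A² − B² for upper-triangular 2×2 matrices A, B over ℤ/16ℤ; i.e., the set of such non-representable matrices has cardinality 48. -/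
set_option maxRecDepth 40000

namespace Mod16Aux

def pi4 : ZMod 16 → ZMod 4 := fun a => (a.val : ZMod 4)
def pi2 : ZMod 16 → ZMod 2 := fun a => (a.val : ZMod 2)

lemma pi4_add : ∀ a b : ZMod 16, pi4 (a+b) = pi4 a + pi4 b := by decide
lemma pi4_sub : ∀ a b : ZMod 16, pi4 (a-b) = pi4 a - pi4 b := by decide
lemma pi4_mul : ∀ a b : ZMod 16, pi4 (a*b) = pi4 a * pi4 b := by decide
lemma pi2_add : ∀ a b : ZMod 16, pi2 (a+b) = pi2 a + pi2 b := by decide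
lemma pi2_sub : ∀ a b : ZMod 16, pi2 (a-b) = pi2 a - pi2 b := by decide
lemma pi2_mul : ∀ a b : ZMod 16, pi2 (a*b) = pi2 a * pi2 b := by decide

lemma sq4 : ∀ a d : ZMod 16, a^2 - d^2 = 4 → pi4 a = 2 ∧ pi4 d = 0 := by decide
lemma sq12 : ∀ a d : ZMod 16, a^2 - d^2 = 12 → pi4 a = 0 ∧ pi4 d = 2 := by decide
lemma sq4_2 : ∀ a d : ZMod 16, a^2 - d^2 = 4 → pi2 a = 0 ∧ pi2 d = 0 := by decide
lemma sq12_2 : ∀ a d : ZMod 16, a^2 - d^2 = 12 → pi2 a = 0 ∧ pi2 d = 0 := by decide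
lemma sq8 : ∀ a d : ZMod 16, a^2 - d^2 = 8 → pi2 a = 1 ∧ pi2 d = 1 := by decide
lemma val4_of_pi4 : ∀ t : ZMod 16, pi4 t = 0 → t.val % 4 = 0 := by decide
lemma val2_of_pi2 : ∀ t : ZMod 16, pi2 t = 0 → t.val % 2 = 0 := by decide
lemma exists_of_mod4 : ∀ t : ZMod 16, t.val % 4 = 0 → ∃ s, t = 4 * s := by decide
lemma exists_of_mod2 : ∀ t : ZMod 16, t.val % 2 = 0 → ∃ s, t = 2 * s := by decide

lemma sq_eq (a b c : ZMod 16) : (!![a, b; 0, c])^2 = !![a^2, a*b + b*c; 0, c^2] := by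
  ext i j
  fin_cases i <;> fin_cases j <;>
    simp [pow_two, Matrix.mul_apply, Fin.sum_univ_two, sq]

lemma sub_eq (a b c d e f : ZMod 16) :
    !![a,b;0,c] - !![d,e;0,f] = !![a-d, b-e; 0, c-f] := by
  ext i j
  fin_cases i <;> fin_cases j <;> simp

lemma ut_lit (a b c : ZMod 16) : IsUpperTriangular !![a, b; 0, c] := by
  simp [IsUpperTriangular]

lemma repr_iff (M : Matrix (Fin 2) (Fin 2) (ZMod 16)) :
    ReprDiffSqUT M ↔ ∃ a b c d e f : ZMod 16,
      M = !![a^2 - d^2, (a*b + b*c) - (d*e + e*f); 0, c^2 - f^2] := by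
  constructor
  · rintro ⟨A, B, hA, hB, rfl⟩
    refine ⟨A 0 0, A 0 1, A 1 1, B 0 0, B 0 1, B 1 1, ?_⟩
    have hA' : A = !![A 0 0, A 0 1; 0, A 1 1] := by rw [← hA]; exact Matrix.eta_fin_two A
    have hB' : B = !![B 0 0, B 0 1; 0, B 1 1] := by rw [← hB]; exact Matrix.eta_fin_two B
    conv_lhs => rw [hA', hB', sq_eq, sq_eq, sub_eq]
  · rintro ⟨a, b, c, d, e, f, rfl⟩
    exact ⟨!![a,b;0,c], !![d,e;0,f], ut_lit _ _ _, ut_lit _ _ _,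
      by rw [sq_eq, sq_eq, sub_eq]⟩

lemma rep_of (u t v a b c d e f : ZMod 16) (hu : u = a^2 - d^2) (hv : v = c^2 - f^2)
    (ht : t = (a*b + b*c) - (d*e + e*f)) : ReprDiffSqUT !![u, t; 0, v] :=
  (repr_iff _).2 ⟨a, b, c, d, e, f, by rw [hu, hv, ht]⟩

lemma rep_odd (u t v a c d f : ZMod 16) (hu : u = a^2 - d^2) (hv : v = c^2 - f^2)
    (h1 : a + c = 1) : ReprDiffSqUT !![u, t; 0, v] :=
  rep_of u t v a t c d 0 f hu hv (by linear_combination (-t) * h1)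

def badP : ZMod 16 × ZMod 16 × ZMod 16 → Prop := fun p =>
  (((p.1 = 4 ∧ p.2.2 = 4) ∨ (p.1 = 12 ∧ p.2.2 = 12)) ∧ p.2.1.val % 4 ≠ 0) ∨
  (((p.1 = 4 ∧ p.2.2 = 12) ∨ (p.1 = 12 ∧ p.2.2 = 4) ∨ (p.1 = 8 ∧ p.2.2 = 8)) ∧ p.2.1.val % 2 = 1)

instance : DecidablePred badP := fun p => by unfold badP; infer_instance

lemma div4_iff (a : ZMod 16) :
    (∃ s : ℤ, 4 ∣ s ∧ a = (s : ZMod 16)) ↔ (a = 0 ∨ a = 4 ∨ a = 8 ∨ a = 12) := by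
  constructor
  · rintro ⟨s, ⟨k, rfl⟩, rfl⟩
    push_cast
    have : ∀ x : ZMod 16, 4*x = 0 ∨ 4*x = 4 ∨ 4*x = 8 ∨ 4*x = 12 := by decide
    exact this _
  · rintro (rfl | rfl | rfl | rfl)
    · exact ⟨0, ⟨0, rfl⟩, by norm_num⟩
    · exact ⟨4, ⟨1, rfl⟩, by norm_num⟩
    · exact ⟨8, ⟨2, rfl⟩, by norm_num⟩
    · exact ⟨12, ⟨3, rfl⟩, by norm_num⟩

lemma good_rep (u t v : ZMod 16) (hu : u = 0 ∨ u = 4 ∨ u = 8 ∨ u = 12)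
    (hv : v = 0 ∨ v = 4 ∨ v = 8 ∨ v = 12) (hb : ¬ badP (u, t, v)) :
    ReprDiffSqUT !![u, t; 0, v] := by
  rcases hu with rfl | rfl | rfl | rfl <;> rcases hv with rfl | rfl | rfl | rfl
  · exact rep_odd _ _ _ 1 0 1 0 (by decide) (by decide) (by decide)
  · exact rep_odd _ _ _ 15 2 15 0 (by decide) (by decide) (by decide)
  · exact rep_odd _ _ _ 14 3 14 1 (by decide) (by decide) (by decide)
  · exact rep_odd _ _ _ 1 0 1 2 (by decide) (by decide) (by decide)
  · exact rep_odd _ _ _ 2 15 0 15 (by decide) (by decide) (by decide)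
  · -- (4,4)
    have h4 : t.val % 4 = 0 := by
      by_contra h
      exact hb (Or.inl ⟨Or.inl ⟨rfl, rfl⟩, h⟩)
    obtain ⟨s, hs⟩ := exists_of_mod4 t h4
    exact rep_of _ _ _ 2 s 2 0 0 0 (by decide) (by decide) (by linear_combination hs)
  · exact rep_odd _ _ _ 2 15 0 3 (by decide) (by decide) (by decide)
  · -- (4,12)
    have h2 : t.val % 2 = 0 := by
      by_contra h
      exact hb (Or.inr ⟨Or.inl ⟨rfl, rfl⟩, show t.val % 2 = 1 by omega⟩)
    obtain ⟨s, hs⟩ := exists_of_mod2 t h2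
    exact rep_of _ _ _ 2 s 0 0 0 2 (by decide) (by decide) (by linear_combination hs)
  · exact rep_odd _ _ _ 1 0 3 0 (by decide) (by decide) (by decide)
  · exact rep_odd _ _ _ 15 2 3 0 (by decide) (by decide) (by decide)
  · -- (8,8)
    have h2 : t.val % 2 = 0 := by
      by_contra h
      exact hb (Or.inr ⟨Or.inr (Or.inr ⟨rfl, rfl⟩), show t.val % 2 = 1 by omega⟩)
    obtain ⟨s, hs⟩ := exists_of_mod2 t h2
    exact rep_of _ _ _ 1 s 1 3 0 3 (by decide) (by decide) (by linear_combination hs)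
  · exact rep_odd _ _ _ 1 0 3 2 (by decide) (by decide) (by decide)
  · exact rep_odd _ _ _ 0 1 2 1 (by decide) (by decide) (by decide)
  · -- (12,4)
    have h2 : t.val % 2 = 0 := by
      by_contra h
      exact hb (Or.inr ⟨Or.inr (Or.inl ⟨rfl, rfl⟩), show t.val % 2 = 1 by omega⟩)
    obtain ⟨s, hs⟩ := exists_of_mod2 t h2
    exact rep_of _ _ _ 0 s 2 2 0 0 (by decide) (by decide) (by linear_combination hs)
  · exact rep_odd _ _ _ 0 1 2 3 (by decide) (by decide) (by decide)
  · -- (12,12)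
    have h4 : t.val % 4 = 0 := by
      by_contra h
      exact hb (Or.inl ⟨Or.inr ⟨rfl, rfl⟩, h⟩)
    obtain ⟨s, hs⟩ := exists_of_mod4 t h4
    exact rep_of _ _ _ 0 0 0 2 (-s) 2 (by decide) (by decide) (by linear_combination hs)

lemma bad_nonrep (u t v : ZMod 16) (hb : badP (u, t, v)) :
    ¬ ReprDiffSqUT !![u, t; 0, v] := by
  intro hr
  rw [repr_iff] at hr
  obtain ⟨a, b, c, d, e, f, hM⟩ := hr
  have hu : u = a^2 - d^2 := by have := congrFun (congrFun hM 0) 0; simpa using this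
  have ht : t = (a*b + b*c) - (d*e + e*f) := by
    have := congrFun (congrFun hM 0) 1; simpa using this
  have hv : v = c^2 - f^2 := by have := congrFun (congrFun hM 1) 1; simpa using this
  have hb' : (((u = 4 ∧ v = 4) ∨ (u = 12 ∧ v = 12)) ∧ t.val % 4 ≠ 0) ∨
      (((u = 4 ∧ v = 12) ∨ (u = 12 ∧ v = 4) ∨ (u = 8 ∧ v = 8)) ∧ t.val % 2 = 1) := hb
  rcases hb' with ⟨h44, ht4⟩ | ⟨h8, ht2⟩
  · apply ht4
    apply val4_of_pi4
    have hkey : pi4 a + pi4 c = 0 ∧ pi4 d + pi4 f = 0 := by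
      rcases h44 with ⟨hu4, hv4⟩ | ⟨hu4, hv4⟩
      · obtain ⟨ha, hd⟩ := sq4 a d (hu4 ▸ hu.symm)
        obtain ⟨hc, hf⟩ := sq4 c f (hv4 ▸ hv.symm)
        rw [ha, hd, hc, hf]; exact ⟨by decide, by decide⟩
      · obtain ⟨ha, hd⟩ := sq12 a d (hu4 ▸ hu.symm)
        obtain ⟨hc, hf⟩ := sq12 c f (hv4 ▸ hv.symm)
        rw [ha, hd, hc, hf]; exact ⟨by decide, by decide⟩
    rw [ht, pi4_sub, pi4_add, pi4_add, pi4_mul, pi4_mul, pi4_mul, pi4_mul]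
    linear_combination (pi4 b) * hkey.1 - (pi4 e) * hkey.2
  · have h2 : t.val % 2 = 0 := by
      apply val2_of_pi2
      have hkey : pi2 a + pi2 c = 0 ∧ pi2 d + pi2 f = 0 := by
        rcases h8 with ⟨hu4, hv4⟩ | ⟨hu4, hv4⟩ | ⟨hu4, hv4⟩
        · obtain ⟨ha, hd⟩ := sq4_2 a d (hu4 ▸ hu.symm)
          obtain ⟨hc, hf⟩ := sq12_2 c f (hv4 ▸ hv.symm)
          rw [ha, hd, hc, hf]; exact ⟨by decide, by decide⟩
        · obtain ⟨ha, hd⟩ := sq12_2 a d (hu4 ▸ hu.symm)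
          obtain ⟨hc, hf⟩ := sq4_2 c f (hv4 ▸ hv.symm)
          rw [ha, hd, hc, hf]; exact ⟨by decide, by decide⟩
        · obtain ⟨ha, hd⟩ := sq8 a d (hu4 ▸ hu.symm)
          obtain ⟨hc, hf⟩ := sq8 c f (hv4 ▸ hv.symm)
          rw [ha, hd, hc, hf]; exact ⟨by decide, by decide⟩
      rw [ht, pi2_sub, pi2_add, pi2_add, pi2_mul, pi2_mul, pi2_mul, pi2_mul]
      linear_combination (pi2 b) * hkey.1 - (pi2 e) * hkey.2
    omega

def f3 (p : ZMod 16 × ZMod 16 × ZMod 16) : Matrix (Fin 2) (Fin 2) (ZMod 16) :=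
  !![p.1, p.2.1; 0, p.2.2]

lemma f3_inj : Function.Injective f3 := by
  rintro ⟨u, t, v⟩ ⟨u', t', v'⟩ h
  simp only [f3] at h
  have h1 : u = u' := by have := congrFun (congrFun h 0) 0; simpa using this
  have h2 : t = t' := by have := congrFun (congrFun h 0) 1; simpa using this
  have h3 : v = v' := by have := congrFun (congrFun h 1) 1; simpa using this
  simp [h1, h2, h3]

end Mod16Aux

theorem mod16_nonrepresentable_count :
    Set.ncard {M : Matrix (Fin 2) (Fin 2) (ZMod 16) |
      (∃ a b c : ZMod 16, M = !![a, b; 0, c] ∧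
        (∃ s : ℤ, 4 ∣ s ∧ a = (s : ZMod 16)) ∧ (∃ s : ℤ, 4 ∣ s ∧ c = (s : ZMod 16))) ∧
      ¬ ReprDiffSqUT M} = 48 := by
  have hset : {M : Matrix (Fin 2) (Fin 2) (ZMod 16) |
      (∃ a b c : ZMod 16, M = !![a, b; 0, c] ∧
        (∃ s : ℤ, 4 ∣ s ∧ a = (s : ZMod 16)) ∧ (∃ s : ℤ, 4 ∣ s ∧ c = (s : ZMod 16))) ∧
      ¬ ReprDiffSqUT M} = Mod16Aux.f3 '' {p | Mod16Aux.badP p} := by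
    ext M
    simp only [Set.mem_setOf_eq, Set.mem_image]
    constructor
    · rintro ⟨⟨a, b, c, rfl, hda, hdc⟩, hnr⟩
      refine ⟨(a, b, c), ?_, rfl⟩
      by_contra hbad
      exact hnr (Mod16Aux.good_rep a b c ((Mod16Aux.div4_iff a).1 hda) ((Mod16Aux.div4_iff c).1 hdc) hbad)
    · rintro ⟨⟨u, t, v⟩, hbad, rfl⟩
      have hb' : (((u = 4 ∧ v = 4) ∨ (u = 12 ∧ v = 12)) ∧ t.val % 4 ≠ 0) ∨
          (((u = 4 ∧ v = 12) ∨ (u = 12 ∧ v = 4) ∨ (u = 8 ∧ v = 8)) ∧ t.val % 2 = 1) := hbad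
      have hu : u = 0 ∨ u = 4 ∨ u = 8 ∨ u = 12 := by tauto
      have hv : v = 0 ∨ v = 4 ∨ v = 8 ∨ v = 12 := by tauto
      exact ⟨⟨u, t, v, rfl, (Mod16Aux.div4_iff u).2 hu, (Mod16Aux.div4_iff v).2 hv⟩,
        Mod16Aux.bad_nonrep u t v hbad⟩
  rw [hset, Set.ncard_image_of_injective _ Mod16Aux.f3_inj]
  have h2 : {p : ZMod 16 × ZMod 16 × ZMod 16 | Mod16Aux.badP p} =
      ↑(Finset.univ.filter Mod16Aux.badP) := by
    ext p; simp
  rw [h2, Set.ncard_coe_finset]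
  decide
end

section
/- Let k, n, r be integers and let M = !![4k, r; 0, 4n] over ℤ. Then M can be written as A² − B² for some upper-triangular 2×2 integer matrices A and B if and only if one of the following holds: (1) k + n ≡ 1 (mod 2), or (k mod 4, n mod 4) ∈ {(0,0), (0,2), (2,0)}, with r arbitrary; (2) k + n ≡ 0 (mod 4), (k mod 4, n mod 4) ≠ (0,0), and r ≡ 0 (mod 2); (3) k + n ≡ 2 (mod 4), (k mod 4, n mod 4) ∉ {(0,2), (2,0)}, and r ≡ 0 (mod 4). -/
lemma repr_iff_aux (k n r : ℤ) :
    ReprDiffSqUT !![4*k, r; 0, 4*n] ↔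
    ∃ a b c d x y : ℤ, a^2 - c^2 = 4*k ∧ b^2 - d^2 = 4*n ∧ x*(a+b) - y*(c+d) = r := by
  constructor
  · rintro ⟨A, B, hA, hB, hT⟩
    simp only [IsUpperTriangular] at hA hB
    have h00 := congr_fun (congr_fun hT 0) 0
    have h11 := congr_fun (congr_fun hT 1) 1
    have h01 := congr_fun (congr_fun hT 0) 1
    simp [pow_two, Matrix.mul_apply, Fin.sum_univ_two, hA, hB, Matrix.sub_apply] at h00 h11 h01
    exact ⟨A 0 0, A 1 1, B 0 0, B 1 1, A 0 1, B 0 1, by linear_combination -h00,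
      by linear_combination -h11, by linear_combination -h01⟩
  · rintro ⟨a, b, c, d, x, y, h1, h2, h3⟩
    refine ⟨!![a, x; 0, b], !![c, y; 0, d], by simp [IsUpperTriangular],
      by simp [IsUpperTriangular], ?_⟩
    ext i j
    fin_cases i <;> fin_cases j <;>
      simp [pow_two, Matrix.mul_apply, Fin.sum_univ_two] <;>
      first
      | linear_combination -h1
      | linear_combination -h2
      | linear_combination -h3

lemma sq_class_aux (a : ℤ) :
    (a % 4 = 0 ∧ ∃ t, a^2 = 16*t) ∨ (a % 4 = 2 ∧ ∃ t, a^2 = 32*t+4) ∨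
    (a % 2 = 1 ∧ ∃ t, a^2 = 8*t+1) := by
  obtain ⟨m, rfl | rfl⟩ := Int.even_or_odd' a
  · obtain ⟨j, rfl | rfl⟩ := Int.even_or_odd' m
    · exact Or.inl ⟨by omega, ⟨j^2, by ring⟩⟩
    · obtain ⟨w, hw⟩ := Int.even_mul_succ_self j
      exact Or.inr (Or.inl ⟨by omega, ⟨w, by linear_combination (16:ℤ)*hw⟩⟩)
  · obtain ⟨w, hw⟩ := Int.even_mul_succ_self m
    exact Or.inr (Or.inr ⟨by omega, ⟨w, by linear_combination (4:ℤ)*hw⟩⟩)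

lemma sqdiff_class_aux (a c k : ℤ) (h : a^2 - c^2 = 4*k) :
    (k % 4 = 1 → a % 4 = 2 ∧ c % 4 = 0) ∧
    (k % 4 = 3 → a % 4 = 0 ∧ c % 4 = 2) ∧
    (k % 4 = 2 → a % 2 = 1 ∧ c % 2 = 1) := by
  rcases sq_class_aux a with ⟨ha, t, hat⟩ | ⟨ha, t, hat⟩ | ⟨ha, t, hat⟩ <;>
    rcases sq_class_aux c with ⟨hc, s, hcs⟩ | ⟨hc, s, hcs⟩ | ⟨hc, s, hcs⟩ <;>
    rw [hat, hcs] at h <;> omega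

theorem case_4k_4n (k n r : ℤ) :
    ReprDiffSqUT !![4 * k, r; 0, 4 * n] ↔
      ((k + n ≡ 1 [ZMOD 2]) ∨ (k % 4, n % 4) ∈ ({(0, 0), (0, 2), (2, 0)} : Set (ℤ × ℤ))) ∨
      ((k + n ≡ 0 [ZMOD 4]) ∧ (k % 4, n % 4) ≠ ((0 : ℤ), (0 : ℤ)) ∧ r ≡ 0 [ZMOD 2]) ∨
      ((k + n ≡ 2 [ZMOD 4]) ∧ (k % 4, n % 4) ∉ ({(0, 2), (2, 0)} : Set (ℤ × ℤ)) ∧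
        r ≡ 0 [ZMOD 4]) := by
  rw [repr_iff_aux]
  constructor
  · rintro ⟨a, b, c, d, x, y, h1, h2, h3⟩
    have H1 := sqdiff_class_aux a c k h1
    have H2 := sqdiff_class_aux b d n h2
    have hr2 : ((k%4 = 1 ∧ n%4 = 3) ∨ (k%4 = 3 ∧ n%4 = 1) ∨ (k%4 = 2 ∧ n%4 = 2)) →
        r % 2 = 0 := by
      intro hc
      have hab : (2:ℤ) ∣ a + b := by omega
      have hcd : (2:ℤ) ∣ c + d := by omega
      have : (2:ℤ) ∣ r := h3 ▸ dvd_sub (hab.mul_left x) (hcd.mul_left y)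
      omega
    have hr4 : ((k%4 = 1 ∧ n%4 = 1) ∨ (k%4 = 3 ∧ n%4 = 3)) → r % 4 = 0 := by
      intro hc
      have hab : (4:ℤ) ∣ a + b := by omega
      have hcd : (4:ℤ) ∣ c + d := by omega
      have : (4:ℤ) ∣ r := h3 ▸ dvd_sub (hab.mul_left x) (hcd.mul_left y)
      omega
    simp only [Int.ModEq, Set.mem_insert_iff, Set.mem_singleton_iff, Prod.mk.injEq, ne_eq]
    rcases (by omega : k%4 = 0 ∨ k%4 = 1 ∨ k%4 = 2 ∨ k%4 = 3) with h|h|h|h <;>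
      rcases (by omega : n%4 = 0 ∨ n%4 = 1 ∨ n%4 = 2 ∨ n%4 = 3) with h'|h'|h'|h' <;>
      omega
  · simp only [Int.ModEq, Set.mem_insert_iff, Set.mem_singleton_iff, Prod.mk.injEq, ne_eq]
    rintro ((h1 | hset) | ⟨h2a, -, h2r⟩ | ⟨h3a, -, h3r⟩)
    · -- k + n odd
      obtain ⟨M, rfl⟩ : ∃ M, k = 2*M + 1 - n := ⟨(k + n - 1)/2, by omega⟩
      exact ⟨2*M + 2 - n, n + 1, 2*M - n, n - 1, r*(-M^2 - M + 1), r*(-(M^2 + 3*M + 2)),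
        by ring, by ring, by ring⟩
    · rcases hset with ⟨hk, hn⟩ | ⟨hk, hn⟩ | ⟨hk, hn⟩
      · obtain ⟨K, rfl⟩ : ∃ K, k = 4*K := ⟨k/4, by omega⟩
        obtain ⟨N, rfl⟩ : ∃ N, n = 4*N := ⟨n/4, by omega⟩
        exact ⟨-2 - 2*K, 4*N + 1, -2 + 2*K, 1 - 4*N,
          r*(2*(2*N - K - 1)^2 + 4*(2*N - K - 1) + 1),
          -r*(2*(2*N - K - 1)^2 + 2*(2*N - K - 1)), by ring, by ring, by ring⟩
      · obtain ⟨K, rfl⟩ : ∃ K, k = 4*K := ⟨k/4, by omega⟩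
        obtain ⟨N, rfl⟩ : ∃ N, n = 4*N + 2 := ⟨(n - 2)/4, by omega⟩
        exact ⟨2 + 2*K, -4*N - 3, 2 - 2*K, 4*N + 1,
          r*(1 - 2*(K - 2*N - 1)^2), r*(2*(K - 2*N - 1)^2 + 2*(K - 2*N - 1)),
          by ring, by ring, by ring⟩
      · obtain ⟨K, rfl⟩ : ∃ K, k = 4*K + 2 := ⟨(k - 2)/4, by omega⟩
        obtain ⟨N, rfl⟩ : ∃ N, n = 4*N := ⟨n/4, by omega⟩
        exact ⟨-4*K - 3, 2*N + 2, 4*K + 1, 2 - 2*N,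
          r*(1 - 2*(N - 2*K - 1)^2), r*(2*(N - 2*K - 1)^2 + 2*(N - 2*K - 1)),
          by ring, by ring, by ring⟩
    · -- k + n ≡ 0 mod 4, r even
      obtain ⟨m, rfl⟩ : ∃ m, k = 4*m - n := ⟨(k + n)/4, by omega⟩
      obtain ⟨R, rfl⟩ : ∃ R, r = 2*R := ⟨r/2, by omega⟩
      exact ⟨4*m - n + 1, n + 1, 4*m - n - 1, n - 1, R*(1 - m), -R*m, by ring, by ring, by ring⟩
    · -- k + n ≡ 2 mod 4, r ≡ 0 mod 4
      obtain ⟨m, rfl⟩ : ∃ m, k = 4*m + 2 - n := ⟨(k + n - 2)/4, by omega⟩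
      obtain ⟨R, rfl⟩ : ∃ R, r = 4*R := ⟨r/4, by omega⟩
      exact ⟨4*m + 3 - n, n + 1, 4*m + 1 - n, n - 1, R, R, by ring, by ring, by ring⟩
end

section
/- For all integers K, N, r, the matrix !![16K, r; 0, 16N] can be written as A² − B² for some upper-triangular 2×2 integer matrices A and B. -/
theorem rep_16K_16N (K N r : ℤ) :
    ReprDiffSqUT (!![16 * K, r; 0, 16 * N] : Matrix (Fin 2) (Fin 2) ℤ) := by
  refine ⟨!![-(4*K+1), (N - 2*K) * r; 0, 2*N+2],
          !![-(4*K-1), (N - 2*K + 1) * r; 0, 2*N-2], ?_, ?_, ?_⟩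
  · simp [IsUpperTriangular]
  · simp [IsUpperTriangular]
  · ext i j
    fin_cases i <;> fin_cases j <;>
      simp [pow_two, Matrix.mul_apply, Fin.sum_univ_succ] <;> ring
end

section
/- For all integers K, N, r, the matrix !![16K, r; 0, 8(2N+1)] can be written as A² − B² for some upper-triangular 2×2 integer matrices A and B. -/
lemma aux_rep (a x b c y d t11 t12 t22 : ℤ) (h1 : t11 = a^2 - c^2)
    (h2 : t12 = a*x + x*b - (c*y + y*d)) (h3 : t22 = b^2 - d^2) :
    ReprDiffSqUT (!![t11, t12; 0, t22] : Matrix (Fin 2) (Fin 2) ℤ) := by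
  refine ⟨!![a,x;0,b], !![c,y;0,d], rfl, rfl, ?_⟩
  ext i j
  fin_cases i <;> fin_cases j <;>
    simp [pow_two, Matrix.mul_apply, Fin.sum_univ_succ, h1, h2, h3]

theorem rep_16K_8odd (K N r : ℤ) :
    ReprDiffSqUT (!![16 * K, r; 0, 8 * (2 * N + 1)] : Matrix (Fin 2) (Fin 2) ℤ) := by
  rcases Int.even_or_odd (K + N) with ⟨j, hj⟩ | ⟨j, hj⟩
  · have hK : K = j + j - N := by omega
    subst hK
    exact aux_rep (2*(j+j-N)+2) (r*((2*(j+j-N)+2*N+5)-(j+1)*(2*j+3))) (2*N+3)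
      (2*(j+j-N)-2) (-(r*((j+1)*(2*j+3)))) (2*N-1) _ _ _ (by ring) (by ring) (by ring)
  · have hK : K = 2*j + 1 - N := by omega
    subst hK
    exact aux_rep (2*(2*j+1-N)+2) (r*((2*(2*j+1-N)+2*N+5)-(2*j+3)*(j+2))) (2*N+3)
      (2*(2*j+1-N)-2) (-(r*((2*j+3)*(j+2)))) (2*N-1) _ _ _ (by ring) (by ring) (by ring)
end
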